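/- arXiv:2509.12173 — 4 statements merged into one kernel-verified Lean document; each statement's English description precedes it below -/
import Mathlib

section
/- Under the stated integrability of ℓ = log L with respect to p_0, the map t ↦ Z_t = ∫ p_0(x) L(x)^t dx is differentiable on [0,1] with derivative ∂_t Z_t = Z_t · E_{p_t}[ℓ], and consequently the tempered density satisfies ∂_t p_t(x) = (ℓ(x) − E_{p_t}[ℓ]) · p_t(x). -/
/-!
For `0 < a ≤ 1` and `s, t ≥ 0` the mean value theorem gives
`|a ^ s - a ^ t| ≤ |log a| * |s - t|`, so the difference quotients of `s ↦ p₀ x * L x ^ s` are dominated by the integrable function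
`p₀ * |log L|`, and dominated convergence differentiates `Z` under the integral sign. This works
only within `[0, ∞)`: for `s < 0` the function `L ^ s` need not be `p₀`-integrable, which is why
the derivative at `t = 0` is one-sided. Since `∫ p₀ = 1` and `L > 0`, `Z t > 0`, and the formula
for `∂ₜ p_t` is the quotient rule written with logarithmic derivatives.
-/

open MeasureTheory Set Filter Topology

lemma hasDerivAt_const_mul_rpow (w : ℝ) {a : ℝ} (ha : 0 < a) (t : ℝ) :
    HasDerivAt (fun s => w * a ^ s) (w * a ^ t * Real.log a) t := by
  simpa only [mul_assoc] using (Real.hasStrictDerivAt_const_rpow ha t).hasDerivAt.const_mul w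

lemma abs_rpow_sub_rpow_le_of_le_one {a s t : ℝ} (ha₀ : 0 < a) (ha₁ : a ≤ 1)
    (hs : 0 ≤ s) (ht : 0 ≤ t) : |a ^ s - a ^ t| ≤ |Real.log a| * |s - t| := by
  have hderiv : ∀ u ∈ Ici (0 : ℝ),
      HasDerivWithinAt (fun u => a ^ u) (a ^ u * Real.log a) (Ici 0) u :=
    fun u _ => (Real.hasStrictDerivAt_const_rpow ha₀ u).hasDerivAt.hasDerivWithinAt
  have hbound : ∀ u ∈ Ici (0 : ℝ), ‖a ^ u * Real.log a‖ ≤ |Real.log a| := fun u hu => by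
    rw [Real.norm_eq_abs, abs_mul, abs_of_pos (Real.rpow_pos_of_pos ha₀ u)]
    exact mul_le_of_le_one_left (abs_nonneg _) (Real.rpow_le_one ha₀.le ha₁ hu)
  exact (convex_Ici 0).norm_image_sub_le_of_norm_hasDerivWithin_le hderiv hbound ht hs

variable {α : Type*} [MeasurableSpace α] {μ : Measure α}

lemma integrable_mul_rpow_of_le_one {w a : α → ℝ} (hw : Integrable w μ) (ha : Measurable a)
    (ha₀ : ∀ x, 0 < a x) (ha₁ : ∀ x, a x ≤ 1) {s : ℝ} (hs : 0 ≤ s) :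
    Integrable (fun x => w x * a x ^ s) μ := by
  refine hw.mono (hw.aestronglyMeasurable.mul (ha.pow_const s).aestronglyMeasurable) ?_
  filter_upwards with x
  rw [norm_mul, Real.norm_eq_abs (a x ^ s), abs_of_pos (Real.rpow_pos_of_pos (ha₀ x) s)]
  exact mul_le_of_le_one_right (norm_nonneg _) (Real.rpow_le_one (ha₀ x).le (ha₁ x) hs)

theorem hasDerivWithinAt_integral_of_dominated_lipschitz {E : Type*} [NormedAddCommGroup E]
    [NormedSpace ℝ E] {F : ℝ → α → E} {F' : α → E}
    {bound : α → ℝ} {s : Set ℝ} {t : ℝ} (hF_int : ∀ u ∈ s, Integrable (F u) μ)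
    (h_lip : ∀ u ∈ s, ∀ᵐ x ∂μ, ‖F u x - F t x‖ ≤ bound x * |u - t|)
    (bound_integrable : Integrable bound μ)
    (h_diff : ∀ᵐ x ∂μ, HasDerivWithinAt (F · x) (F' x) s t) (ht : t ∈ s) :
    HasDerivWithinAt (fun u => ∫ x, F u x ∂μ) (∫ x, F' x ∂μ) s t := by
  rw [hasDerivWithinAt_iff_tendsto_slope]
  have hslope : Tendsto (fun u => ∫ x, slope (F · x) t u ∂μ) (𝓝[s \ {t}] t)
      (𝓝 (∫ x, F' x ∂μ)) := by
    refine tendsto_integral_filter_of_dominated_convergence bound ?_ ?_ bound_integrable ?_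
    · filter_upwards [self_mem_nhdsWithin] with u hu
      exact (((hF_int u hu.1).sub (hF_int t ht)).smul (u - t)⁻¹).aestronglyMeasurable
    · filter_upwards [self_mem_nhdsWithin] with u hu
      filter_upwards [h_lip u hu.1] with x hx
      have hut : 0 < |u - t| := abs_pos.mpr (sub_ne_zero.mpr hu.2)
      rw [slope, vsub_eq_sub, norm_smul, norm_inv, Real.norm_eq_abs, inv_mul_le_iff₀ hut, mul_comm]
      exact hx
    · filter_upwards [h_diff] with x hx
      exact hasDerivWithinAt_iff_tendsto_slope.mp hx
  refine hslope.congr' ?_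
  filter_upwards [self_mem_nhdsWithin] with u hu
  simp only [slope, vsub_eq_sub]
  rw [integral_smul, integral_sub (hF_int u hu.1) (hF_int t ht)]

theorem hasDerivWithinAt_integral_mul_rpow {w a : α → ℝ} (hw : Integrable w μ)
    (ha : Measurable a) (ha₀ : ∀ x, 0 < a x) (ha₁ : ∀ x, a x ≤ 1)
    (hw_log : Integrable (fun x => w x * |Real.log (a x)|) μ) {t : ℝ} (ht : 0 ≤ t) :
    HasDerivWithinAt (fun s => ∫ x, w x * a x ^ s ∂μ) (∫ x, w x * a x ^ t * Real.log (a x) ∂μ)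
      (Ici 0) t := by
  refine hasDerivWithinAt_integral_of_dominated_lipschitz
    (bound := fun x => ‖w x * |Real.log (a x)|‖)
    (fun s hs => integrable_mul_rpow_of_le_one hw ha ha₀ ha₁ hs) ?_ hw_log.norm ?_ ht
  · intro s hs
    filter_upwards with x
    rw [← mul_sub, norm_mul, norm_mul, Real.norm_eq_abs, Real.norm_eq_abs, Real.norm_eq_abs,
      abs_abs, mul_assoc]
    exact mul_le_mul_of_nonneg_left (abs_rpow_sub_rpow_le_of_le_one (ha₀ x) (ha₁ x) hs ht)
      (abs_nonneg _)
  · exact ae_of_all _ fun x => (hasDerivAt_const_mul_rpow (w x) (ha₀ x) t).hasDerivWithinAt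

lemma integral_mul_pos_of_pos {f g : α → ℝ} (hf : 0 ≤ f) (hf_pos : 0 < ∫ x, f x ∂μ)
    (hg : ∀ x, 0 < g x) (hfg : Integrable (fun x => f x * g x) μ) :
    0 < ∫ x, f x * g x ∂μ := by
  have hg_supp : Function.support g = univ := eq_univ_of_forall fun x => (hg x).ne'
  rw [integral_pos_iff_support_of_nonneg (fun x => mul_nonneg (hf x) (hg x).le) hfg,
    Function.support_mul, hg_supp, inter_univ]
  exact (integral_pos_iff_support_of_nonneg hf (.of_integral_ne_zero hf_pos.ne')).mp hf_pos

lemma HasDerivWithinAt.div_of_logDeriv {f g : ℝ → ℝ} {a b t : ℝ} {s : Set ℝ}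
    (hf : HasDerivWithinAt f (f t * a) s t) (hg : HasDerivWithinAt g (g t * b) s t)
    (hg₀ : g t ≠ 0) : HasDerivWithinAt (fun u => f u / g u) ((a - b) * (f t / g t)) s t :=
  (hf.div hg hg₀).congr_deriv (by field_simp)

theorem stmt_4_general (d : ℕ) (p0 L : (Fin d → ℝ) → ℝ)
    (hp0 : ∀ x, 0 ≤ p0 x) (hp0int : ∫ x, p0 x = 1)
    (hLm : Measurable L) (hLpos : ∀ x, 0 < L x)
    (c : ℝ) (hc : c < 1) (hLb : ∀ x, L x ≤ c)
    (hℓint : Integrable (fun x => p0 x * |Real.log (L x)|))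
    (Z : ℝ → ℝ) (hZ : ∀ t, Z t = ∫ x, p0 x * L x ^ t)
    (p : ℝ → (Fin d → ℝ) → ℝ) (hp : ∀ t x, p t x = p0 x * L x ^ t / Z t) :
    ∀ t ∈ Icc (0 : ℝ) 1,
      HasDerivWithinAt Z (Z t * ∫ x, Real.log (L x) * p t x) (Icc 0 1) t ∧
        ∀ x, HasDerivWithinAt (fun s => p s x)
          ((Real.log (L x) - ∫ x', Real.log (L x') * p t x') * p t x) (Icc 0 1) t := by
  rintro t ⟨ht₀, -⟩
  have hL₁ : ∀ x, L x ≤ 1 := fun x => (hLb x).trans hc.le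
  have hp0i : Integrable p0 := integrable_of_integral_eq_one hp0int
  have hZ_pos : 0 < Z t := hZ t ▸ integral_mul_pos_of_pos hp0 (by rw [hp0int]; exact one_pos)
    (fun x => Real.rpow_pos_of_pos (hLpos x) t)
    (integrable_mul_rpow_of_le_one hp0i hLm hLpos hL₁ ht₀)
  have hE : Z t * ∫ x, Real.log (L x) * p t x = ∫ x, p0 x * L x ^ t * Real.log (L x) := by
    simp_rw [hp t, mul_div_assoc', integral_div, mul_comm (Real.log _)]
    field_simp
  have hZ_deriv : HasDerivWithinAt Z (Z t * ∫ x, Real.log (L x) * p t x) (Icc 0 1) t := by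
    rw [hE, funext hZ]
    exact (hasDerivWithinAt_integral_mul_rpow hp0i hLm hLpos hL₁ hℓint ht₀).mono
      Icc_subset_Ici_self
  refine ⟨hZ_deriv, fun x => ?_⟩
  simpa only [← hp] using (hasDerivAt_const_mul_rpow (p0 x) (hLpos x) t).hasDerivWithinAt
    |>.div_of_logDeriv hZ_deriv hZ_pos.ne'

/-- Derivative of the tempered normalising constant and of the tempered posterior pdf:
`∂ₜ Z_t = Z_t ⬝ E_{p_t}[ℓ]` and `∂ₜ p_t(x) = (ℓ(x) − E_{p_t}[ℓ]) p_t(x)` on `[0,1]`,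
where `ℓ = log L`. -/
theorem stmt_4 (d : ℕ) (p0 L : (Fin d → ℝ) → ℝ)
    (hp0m : Measurable p0) (hp0 : ∀ x, 0 ≤ p0 x) (hp0int : ∫ x, p0 x = 1)
    (hLm : Measurable L) (hLpos : ∀ x, 0 < L x)
    (c : ℝ) (hc : c < 1) (hLb : ∀ x, L x ≤ c)
    (hℓint : Integrable (fun x => p0 x * |Real.log (L x)|))
    (Z : ℝ → ℝ) (hZ : ∀ t, Z t = ∫ x, p0 x * L x ^ t)
    (p : ℝ → (Fin d → ℝ) → ℝ) (hp : ∀ t x, p t x = p0 x * L x ^ t / Z t) :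
    ∀ t ∈ Icc (0 : ℝ) 1,
      HasDerivWithinAt Z (Z t * ∫ x, Real.log (L x) * p t x) (Icc 0 1) t ∧
        ∀ x, HasDerivWithinAt (fun s => p s x)
          ((Real.log (L x) - ∫ x', Real.log (L x') * p t x') * p t x) (Icc 0 1) t :=
  stmt_4_general d p0 L hp0 hp0int hLm hLpos c hc hLb hℓint Z hZ p hp
end

section
/- For the tempered expectation g(t) = E_{p_t}[f], assuming the moments E_{p_0}[|f ℓ^n|] and E_{p_0}[|ℓ^n|] exist for all n ≤ k, the recurrence E_{p_t}[f ℓ^k] = ∑_{n=0}^{k} C(k,n) · g^{(k−n)}(t) · E_{p_t}[ℓ^n] holds for all t ∈ [0,1], where C(k,n) is the binomial coefficient; in particular for k = 1, g'(t) = E_{p_t}[f ℓ] − E_{p_t}[f] E_{p_t}[ℓ]. -/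
/-!
Write `N_ψ(s) = ∫ ψ L^s`. For `0 < L ≤ 1` and `s, t ≥ 0` the mean value theorem bounds the
difference quotients of `s ↦ L^s` by `|log L|`, so dominated convergence differentiates under the
integral on `[0, ∞)`: `N_ψ' = N_{ψ ℓ}`, hence `N_ψ^{(n)} = N_{ψ ℓ^n}` as long as these moments
exist. Since `g = N_{p₀ f} / Z` with `Z = N_{p₀}`, Leibniz's rule for `N_{p₀ f} = Z g`, divided
by `Z`, is the recurrence; for `k = 1` it is the quotient rule.
-/

open MeasureTheory Set Filter Real

lemma abs_slope_rpow_le {l s t : ℝ} (hl0 : 0 < l) (hl1 : l ≤ 1) (hs : 0 ≤ s) (ht : 0 ≤ t) :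
    |slope (fun r => l ^ r) t s| ≤ |log l| := by
  have hmvt : ‖l ^ s - l ^ t‖ ≤ |log l| * ‖s - t‖ :=
    (convex_Ici (0 : ℝ)).norm_image_sub_le_of_norm_hasDerivWithin_le
      (fun r _ => (hasStrictDerivAt_const_rpow hl0 r).hasDerivAt.hasDerivWithinAt)
      (fun r (hr : 0 ≤ r) => by
        rw [Real.norm_eq_abs, abs_mul, abs_of_pos (rpow_pos_of_pos hl0 r)]
        exact mul_le_of_le_one_left (abs_nonneg _) (rpow_le_one hl0.le hl1 hr)) ht hs
  rw [Real.norm_eq_abs, Real.norm_eq_abs] at hmvt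
  rw [slope_def_field, abs_div]
  rcases eq_or_ne s t with rfl | hst
  · simp
  · rwa [div_le_iff₀ (abs_pos.mpr (sub_ne_zero.mpr hst))]

section

variable {α : Type*} [MeasurableSpace α] {μ : Measure α} {L ψ w φ : α → ℝ} {S : Set ℝ} {k : ℕ}
  {t : ℝ}

lemma integrable_mul_of_integrable_abs_mul (hφ : AEStronglyMeasurable φ μ)
    (hw : AEStronglyMeasurable w μ) (hw0 : ∀ x, 0 ≤ w x)
    (h : Integrable (fun x => |φ x| * w x) μ) : Integrable (fun x => w x * φ x) μ :=
  h.mono' (hw.mul hφ) (ae_of_all _ fun x => le_of_eq (by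
    rw [Real.norm_eq_abs, abs_mul, abs_of_nonneg (hw0 x), mul_comm]))

noncomputable def tiltedIntegral (μ : Measure α) (L ψ : α → ℝ) (s : ℝ) : ℝ :=
  ∫ x, ψ x * L x ^ s ∂μ

lemma integrable_mul_rpow (hψ : Integrable ψ μ) (hL : Measurable L) (hL0 : ∀ x, 0 < L x)
    (hL1 : ∀ x, L x ≤ 1) {s : ℝ} (hs : 0 ≤ s) : Integrable (fun x => ψ x * L x ^ s) μ := by
  refine hψ.mono (hψ.aestronglyMeasurable.mul (hL.pow_const s).aestronglyMeasurable)
    (ae_of_all _ fun x => ?_)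
  rw [norm_mul, Real.norm_of_nonneg (rpow_pos_of_pos (hL0 x) s).le]
  exact mul_le_of_le_one_right (norm_nonneg _) (rpow_le_one (hL0 x).le (hL1 x) hs)

lemma continuousOn_tiltedIntegral (hψ : Integrable ψ μ) (hL : Measurable L)
    (hL0 : ∀ x, 0 < L x) (hL1 : ∀ x, L x ≤ 1) : ContinuousOn (tiltedIntegral μ L ψ) (Ici 0) := by
  refine continuousOn_of_dominated
    (fun s hs => (integrable_mul_rpow hψ hL hL0 hL1 hs).aestronglyMeasurable)
    (fun s (hs : 0 ≤ s) => ae_of_all _ fun x => ?_) hψ.norm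
    (ae_of_all _ fun x => ((continuous_const_rpow (hL0 x).ne').const_mul _).continuousOn)
  rw [norm_mul, Real.norm_of_nonneg (rpow_pos_of_pos (hL0 x) s).le]
  exact mul_le_of_le_one_right (norm_nonneg _) (rpow_le_one (hL0 x).le (hL1 x) hs)

lemma hasDerivWithinAt_tiltedIntegral (hψ : Integrable ψ μ)
    (hψL : Integrable (fun x => ψ x * log (L x)) μ) (hL : Measurable L) (hL0 : ∀ x, 0 < L x)
    (hL1 : ∀ x, L x ≤ 1) (ht : 0 ≤ t) :
    HasDerivWithinAt (tiltedIntegral μ L ψ)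
      (tiltedIntegral μ L (fun x => ψ x * log (L x)) t) (Ici 0) t := by
  have hslope : ∀ s ∈ Ici (0 : ℝ), slope (tiltedIntegral μ L ψ) t s
      = ∫ x, ψ x * slope (fun r => L x ^ r) t s ∂μ := by
    intro s hs
    simp only [slope_def_field, tiltedIntegral, mul_div_assoc']
    rw [← integral_sub (integrable_mul_rpow hψ hL hL0 hL1 hs)
      (integrable_mul_rpow hψ hL hL0 hL1 ht), ← integral_div]
    simp only [mul_sub]
  rw [hasDerivWithinAt_iff_tendsto_slope]
  refine Tendsto.congr' (eventually_nhdsWithin_of_forall fun s hs => (hslope s hs.1).symm) ?_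
  refine tendsto_integral_filter_of_dominated_convergence (fun x => |ψ x * log (L x)|)
    (Eventually.of_forall fun s => ?_) (eventually_nhdsWithin_of_forall fun s hs => ?_)
    hψL.abs (ae_of_all _ fun x => ?_)
  · exact hψ.aestronglyMeasurable.mul (by simp only [slope_def_field]; fun_prop)
  · refine ae_of_all _ fun x => ?_
    rw [Real.norm_eq_abs, abs_mul, abs_mul]
    exact mul_le_mul_of_nonneg_left (abs_slope_rpow_le (hL0 x) (hL1 x) hs.1 ht) (abs_nonneg _)
  · have hx := hasDerivWithinAt_iff_tendsto_slope.mp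
      ((hasStrictDerivAt_const_rpow (hL0 x) t).hasDerivAt.hasDerivWithinAt (s := Ici 0))
    convert hx.const_mul (ψ x) using 2
    ring

lemma hasDerivWithinAt_tiltedIntegral_mul_log_pow {n : ℕ}
    (hn : Integrable (fun x => ψ x * log (L x) ^ n) μ)
    (hn1 : Integrable (fun x => ψ x * log (L x) ^ (n + 1)) μ) (hL : Measurable L)
    (hL0 : ∀ x, 0 < L x) (hL1 : ∀ x, L x ≤ 1) (ht : 0 ≤ t) :
    HasDerivWithinAt (tiltedIntegral μ L fun x => ψ x * log (L x) ^ n)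
      (tiltedIntegral μ L (fun x => ψ x * log (L x) ^ (n + 1)) t) (Ici 0) t := by
  simp only [pow_succ, ← mul_assoc] at hn1 ⊢
  exact hasDerivWithinAt_tiltedIntegral hn hn1 hL hL0 hL1 ht

lemma iteratedDerivWithin_tiltedIntegral (hS : UniqueDiffOn ℝ S) (hS0 : S ⊆ Ici 0)
    (hψ : ∀ n ≤ k, Integrable (fun x => ψ x * log (L x) ^ n) μ) (hL : Measurable L)
    (hL0 : ∀ x, 0 < L x) (hL1 : ∀ x, L x ≤ 1) {n : ℕ} (hn : n ≤ k) :
    EqOn (iteratedDerivWithin n (tiltedIntegral μ L ψ) S)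
      (tiltedIntegral μ L fun x => ψ x * log (L x) ^ n) S := by
  induction n with
  | zero => intro t _; simp [tiltedIntegral]
  | succ n ih =>
    intro t ht
    have ih := ih (by omega)
    rw [iteratedDerivWithin_succ, derivWithin_congr ih (ih ht)]
    exact ((hasDerivWithinAt_tiltedIntegral_mul_log_pow (hψ n (by omega)) (hψ (n + 1) hn) hL hL0
      hL1 (hS0 ht)).mono hS0).derivWithin (hS t ht)

lemma contDiffOn_tiltedIntegral (hS : UniqueDiffOn ℝ S) (hS0 : S ⊆ Ici 0)
    (hψ : ∀ n ≤ k, Integrable (fun x => ψ x * log (L x) ^ n) μ) (hL : Measurable L)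
    (hL0 : ∀ x, 0 < L x) (hL1 : ∀ x, L x ≤ 1) : ContDiffOn ℝ k (tiltedIntegral μ L ψ) S := by
  rw [contDiffOn_nat_iff_continuousOn_differentiableOn_deriv hS]
  refine ⟨fun m hm => ?_, fun m hm t ht => ?_⟩
  · exact ((continuousOn_tiltedIntegral (hψ m hm) hL hL0 hL1).mono hS0).congr
      (iteratedDerivWithin_tiltedIntegral hS hS0 hψ hL hL0 hL1 hm)
  · have heq := iteratedDerivWithin_tiltedIntegral hS hS0 hψ hL hL0 hL1 hm.le
    exact ((hasDerivWithinAt_tiltedIntegral_mul_log_pow (hψ m hm.le) (hψ (m + 1) hm) hL hL0 hL1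
      (hS0 ht)).mono hS0).differentiableWithinAt.congr heq (heq ht)

lemma tiltedIntegral_pos (hw0 : ∀ x, 0 ≤ w x) (hw : Integrable w μ)
    (hw1 : 0 < ∫ x, w x ∂μ) (hL : Measurable L) (hL0 : ∀ x, 0 < L x) (hL1 : ∀ x, L x ≤ 1)
    (ht : 0 ≤ t) : 0 < tiltedIntegral μ L w t := by
  have hsupp : Function.support (fun x => w x * L x ^ t) = Function.support w := by
    ext x
    simp [(rpow_pos_of_pos (hL0 x) t).ne']
  rw [tiltedIntegral, integral_pos_iff_support_of_nonneg
    (fun x => mul_nonneg (hw0 x) (rpow_pos_of_pos (hL0 x) t).le)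
    (integrable_mul_rpow hw hL hL0 hL1 ht), hsupp]
  exact (integral_pos_iff_support_of_nonneg hw0 hw).mp hw1

/-- `E_{p_t}[φ]` for the tempered density `p_t ∝ w L^t` with respect to `μ`. -/
noncomputable def temperedExpectation (μ : Measure α) (L w φ : α → ℝ) (t : ℝ) : ℝ :=
  tiltedIntegral μ L (fun x => w x * φ x) t / tiltedIntegral μ L w t

lemma integral_mul_div_tiltedIntegral (φ : α → ℝ) :
    ∫ x, φ x * (w x * L x ^ t / tiltedIntegral μ L w t) ∂μ = temperedExpectation μ L w φ t := by
  simp only [temperedExpectation, tiltedIntegral, ← integral_div]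
  congr 1 with x
  ring

lemma temperedExpectation_mul_log_pow_eq_sum (hS : UniqueDiffOn ℝ S) (hS0 : S ⊆ Ici 0)
    (hD : ∀ s ∈ S, tiltedIntegral μ L w s ≠ 0)
    (hφ : ∀ n ≤ k, Integrable (fun x => w x * (φ x * log (L x) ^ n)) μ)
    (hw : ∀ n ≤ k, Integrable (fun x => w x * log (L x) ^ n) μ) (hL : Measurable L)
    (hL0 : ∀ x, 0 < L x) (hL1 : ∀ x, L x ≤ 1) (ht : t ∈ S) :
    temperedExpectation μ L w (fun x => φ x * log (L x) ^ k) t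
      = ∑ n ∈ Finset.range (k + 1), (k.choose n : ℝ) *
          iteratedDerivWithin (k - n) (temperedExpectation μ L w φ) S t *
          temperedExpectation μ L w (fun x => log (L x) ^ n) t := by
  simp only [← mul_assoc] at hφ
  have hDC := contDiffOn_tiltedIntegral hS hS0 hw hL hL0 hL1
  have hEC : ContDiffOn ℝ k (temperedExpectation μ L w φ) S :=
    (contDiffOn_tiltedIntegral hS hS0 hφ hL hL0 hL1).div hDC hD
  have hDE : EqOn (tiltedIntegral μ L w * temperedExpectation μ L w φ)
      (tiltedIntegral μ L fun x => w x * φ x) S := fun s hs =>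
    mul_div_cancel₀ _ (hD s hs)
  have hNk := iteratedDerivWithin_tiltedIntegral hS hS0 hφ hL hL0 hL1 le_rfl ht
  simp only [temperedExpectation, ← mul_assoc] at hNk ⊢
  rw [← hNk, ← iteratedDerivWithin_congr hDE ht,
    iteratedDerivWithin_mul ht hS (hDC t ht) (hEC t ht), Finset.sum_div]
  refine Finset.sum_congr rfl fun n hn => ?_
  rw [iteratedDerivWithin_tiltedIntegral hS hS0 hw hL hL0 hL1 (Finset.mem_range_succ_iff.mp hn) ht]
  ring

lemma hasDerivWithinAt_temperedExpectation (hD : tiltedIntegral μ L w t ≠ 0)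
    (hφ0 : Integrable (fun x => w x * φ x) μ)
    (hφ1 : Integrable (fun x => w x * (φ x * log (L x))) μ) (hw0 : Integrable w μ)
    (hw1 : Integrable (fun x => w x * log (L x)) μ) (hL : Measurable L) (hL0 : ∀ x, 0 < L x)
    (hL1 : ∀ x, L x ≤ 1) (ht : 0 ≤ t) :
    HasDerivWithinAt (temperedExpectation μ L w φ)
      (temperedExpectation μ L w (fun x => φ x * log (L x)) t -
        temperedExpectation μ L w φ t * temperedExpectation μ L w (fun x => log (L x)) t)
      (Ici 0) t := by
  simp only [← mul_assoc] at hφ1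
  have hN := hasDerivWithinAt_tiltedIntegral hφ0 hφ1 hL hL0 hL1 ht
  have hDd := hasDerivWithinAt_tiltedIntegral hw0 hw1 hL hL0 hL1 ht
  refine (hN.div hDd hD).congr_deriv ?_
  simp only [temperedExpectation, ← mul_assoc]
  field_simp

end

/-- Recurrence relation for derivatives of the tempered expectation
`g(t) = E_{p_t}[f]`: for all `t ∈ [0,1]`,
`E_{p_t}[f ℓ^k] = ∑_{n=0}^k C(k,n) g^{(k−n)}(t) E_{p_t}[ℓ^n]`;
in particular, for `k = 1`, `g'(t) = E_{p_t}[f ℓ] − E_{p_t}[f] E_{p_t}[ℓ]`. -/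
theorem stmt_5 (d k : ℕ) (p0 L f : (Fin d → ℝ) → ℝ)
    (hp0m : Measurable p0) (hp0 : ∀ x, 0 ≤ p0 x) (hp0int : ∫ x, p0 x = 1)
    (hLm : Measurable L) (hLpos : ∀ x, 0 < L x)
    (c : ℝ) (hc : c < 1) (hLb : ∀ x, L x ≤ c)
    (hf : Measurable f)
    (hmomf : ∀ n ≤ k, Integrable (fun x => |f x * (Real.log (L x)) ^ n| * p0 x))
    (hmomℓ : ∀ n ≤ k, Integrable (fun x => |(Real.log (L x)) ^ n| * p0 x))
    (Z : ℝ → ℝ) (hZ : ∀ t, Z t = ∫ x, p0 x * L x ^ t)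
    (p : ℝ → (Fin d → ℝ) → ℝ) (hp : ∀ t x, p t x = p0 x * L x ^ t / Z t)
    (g : ℝ → ℝ) (hg : ∀ t, g t = ∫ x, f x * p t x) :
    (∀ t ∈ Icc (0 : ℝ) 1,
        ∫ x, f x * (Real.log (L x)) ^ k * p t x =
          ∑ n ∈ Finset.range (k + 1), (k.choose n : ℝ) *
            iteratedDerivWithin (k - n) g (Icc 0 1) t * ∫ x, (Real.log (L x)) ^ n * p t x) ∧
      (1 ≤ k → ∀ t ∈ Icc (0 : ℝ) 1,
        HasDerivWithinAt g
          ((∫ x, f x * Real.log (L x) * p t x) -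
            (∫ x, f x * p t x) * ∫ x, Real.log (L x) * p t x) (Icc 0 1) t) := by
  have hL1 : ∀ x, L x ≤ 1 := fun x => (hLb x).trans hc.le
  have hS0 : Icc (0 : ℝ) 1 ⊆ Ici 0 := Icc_subset_Ici_self
  have hfℓ : ∀ n ≤ k, Integrable (fun x => p0 x * (f x * Real.log (L x) ^ n)) := fun n hn =>
    integrable_mul_of_integrable_abs_mul (hf.mul (hLm.log.pow_const n)).aestronglyMeasurable
      hp0m.aestronglyMeasurable hp0 (hmomf n hn)
  have hℓ : ∀ n ≤ k, Integrable (fun x => p0 x * Real.log (L x) ^ n) := fun n hn =>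
    integrable_mul_of_integrable_abs_mul (hLm.log.pow_const n).aestronglyMeasurable
      hp0m.aestronglyMeasurable hp0 (hmomℓ n hn)
  obtain rfl : Z = tiltedIntegral volume L p0 := funext hZ
  have hE (φ : (Fin d → ℝ) → ℝ) (t : ℝ) :
      ∫ x, φ x * p t x = temperedExpectation volume L p0 φ t := by
    simp only [hp]
    exact integral_mul_div_tiltedIntegral φ
  obtain rfl : g = temperedExpectation volume L p0 f := funext fun t => (hg t).trans (hE f t)
  have hD : ∀ t ∈ Icc (0 : ℝ) 1, tiltedIntegral volume L p0 t ≠ 0 := fun t ht =>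
    (tiltedIntegral_pos hp0 (by simpa using hℓ 0 k.zero_le) (by rw [hp0int]; exact one_pos)
      hLm hLpos hL1 ht.1).ne'
  simp only [hE]
  refine ⟨fun t ht => temperedExpectation_mul_log_pow_eq_sum (uniqueDiffOn_Icc zero_lt_one) hS0
    hD hfℓ hℓ hLm hLpos hL1 ht, fun hk t ht => ?_⟩
  exact (hasDerivWithinAt_temperedExpectation (hD t ht) (by simpa using hfℓ 0 k.zero_le)
    (by simpa using hfℓ 1 hk) (by simpa using hℓ 0 k.zero_le) (by simpa using hℓ 1 hk)
    hLm hLpos hL1 ht.1).mono hS0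
end

section
/- If there exist C_1, C_2 > 0 and m ∈ ℕ with |f| ≤ C_1 + C_2 |ℓ|^m (growth condition), and ∫ p_0(x) L(x)^{−ε} dx < ∞ for some ε > 0 (informative prior condition), then the tempered expectation map g(t) = E_{p_t}[f] is real analytic on [0,1]. -/
/-!
Writing `L ^ t = exp (t * log L)`, both the normalising constant `Z t = ∫ p₀ L ^ t` and the
numerator `N t = ∫ f p₀ L ^ t` are moment generating functions of `log L`, under the measures
with densities `p₀` and (after splitting into positive and negative parts) `f p₀`. A moment
generating function is analytic on the interior of the set where it is finite. Since `L ≤ 1`,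
the informative prior condition makes `p₀ L ^ s` integrable for every `s ≥ -ε`, and powers of
`|log L|` cost only an arbitrarily small part of the exponent, so by the growth condition
`f p₀ L ^ s` is integrable for `s > -ε`. Thus `N` and `Z` are analytic on `(-ε, ∞) ⊇ [0, 1]`,
where `Z > 0`, and `g = N / Z`.
-/

open MeasureTheory Set Real ProbabilityTheory

section ExpIntegrals

variable {α : Type*} [MeasurableSpace α] {μ : Measure α} {X ρ : α → ℝ}

lemma mgf_withDensity_ofReal (hρ : Measurable ρ) (hρ0 : ∀ x, 0 ≤ ρ x) (t : ℝ) :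
    mgf X (μ.withDensity fun x => ENNReal.ofReal (ρ x)) t = ∫ x, ρ x * exp (t * X x) ∂μ := by
  rw [mgf, integral_withDensity_eq_integral_toReal_smul hρ.ennreal_ofReal
    (ae_of_all _ fun _ => ENNReal.ofReal_lt_top)]
  simp only [ENNReal.toReal_ofReal (hρ0 _), smul_eq_mul]

lemma integrableExpSet_withDensity_ofReal (hρ : Measurable ρ) (hρ0 : ∀ x, 0 ≤ ρ x) :
    integrableExpSet X (μ.withDensity fun x => ENNReal.ofReal (ρ x)) =
      {t | Integrable (fun x => ρ x * exp (t * X x)) μ} := by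
  ext t
  change Integrable _ _ ↔ Integrable _ _
  rw [integrable_withDensity_iff_integrable_smul' hρ.ennreal_ofReal
    (ae_of_all _ fun _ => ENNReal.ofReal_lt_top)]
  simp only [ENNReal.toReal_ofReal (hρ0 _), smul_eq_mul]

lemma integrable_mul_pow_abs_mul_exp_of_mem_interior (hρ : Measurable ρ) (hρ0 : ∀ x, 0 ≤ ρ x)
    {t : ℝ} (ht : t ∈ interior {s | Integrable (fun x => ρ x * exp (s * X x)) μ}) (n : ℕ) :
    Integrable (fun x => ρ x * (|X x| ^ n * exp (t * X x))) μ := by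
  rw [← integrableExpSet_withDensity_ofReal hρ hρ0] at ht
  have := integrable_pow_abs_mul_exp_of_mem_interior_integrableExpSet ht n
  rw [integrable_withDensity_iff_integrable_smul' hρ.ennreal_ofReal
    (ae_of_all _ fun _ => ENNReal.ofReal_lt_top)] at this
  simpa only [ENNReal.toReal_ofReal (hρ0 _), smul_eq_mul] using this

lemma analyticOnNhd_integral_mul_exp_mul_of_nonneg (hρ : Measurable ρ) (hρ0 : ∀ x, 0 ≤ ρ x) :
    AnalyticOnNhd ℝ (fun t => ∫ x, ρ x * exp (t * X x) ∂μ)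
      (interior {t | Integrable (fun x => ρ x * exp (t * X x)) μ}) := by
  rw [← integrableExpSet_withDensity_ofReal hρ hρ0, ← funext (mgf_withDensity_ofReal hρ hρ0)]
  exact analyticOnNhd_mgf

lemma integrable_mul_exp_mul_of_le_abs {f : α → ℝ} {t : ℝ}
    (h : Integrable (fun x => f x * exp (t * X x)) μ) (hρ : Measurable ρ) (hX : Measurable X)
    (hρ0 : ∀ x, 0 ≤ ρ x) (hρf : ∀ x, ρ x ≤ |f x|) :
    Integrable (fun x => ρ x * exp (t * X x)) μ :=
  h.mono (hρ.mul (measurable_exp.comp (hX.const_mul t))).aestronglyMeasurable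
    (ae_of_all _ fun x => by
      simp only [norm_mul, norm_eq_abs, abs_of_nonneg (hρ0 x)]
      exact mul_le_mul_of_nonneg_right (hρf x) (abs_nonneg _))

lemma analyticOnNhd_integral_mul_exp_mul {f : α → ℝ} (hf : Measurable f) (hX : Measurable X) :
    AnalyticOnNhd ℝ (fun t => ∫ x, f x * exp (t * X x) ∂μ)
      (interior {t | Integrable (fun x => f x * exp (t * X x)) μ}) := by
  set S := {t | Integrable (fun x => f x * exp (t * X x)) μ}
  set fpos := fun x => max (f x) 0
  set fneg := fun x => max (-f x) 0
  have hfpos : Measurable fpos := hf.max measurable_const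
  have hfneg : Measurable fneg := hf.neg.max measurable_const
  have hint_pos : S ⊆ {t | Integrable (fun x => fpos x * exp (t * X x)) μ} := fun _ ht =>
    integrable_mul_exp_mul_of_le_abs ht hfpos hX (fun _ => le_max_right _ _)
      (fun _ => max_le (le_abs_self _) (abs_nonneg _))
  have hint_neg : S ⊆ {t | Integrable (fun x => fneg x * exp (t * X x)) μ} := fun _ ht =>
    integrable_mul_exp_mul_of_le_abs ht hfneg hX (fun _ => le_max_right _ _)
      (fun _ => max_le (neg_le_abs _) (abs_nonneg _))
  have hpos := (analyticOnNhd_integral_mul_exp_mul_of_nonneg hfpos fun _ => le_max_right _ _).mono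
    (interior_mono hint_pos)
  have hneg := (analyticOnNhd_integral_mul_exp_mul_of_nonneg hfneg fun _ => le_max_right _ _).mono
    (interior_mono hint_neg)
  refine (hpos.sub hneg).congr isOpen_interior fun t ht => ?_
  have ht' := interior_subset ht
  simp only [fpos, fneg, Pi.sub_apply, ← integral_sub (hint_pos ht') (hint_neg ht'), ← sub_mul,
    max_zero_sub_max_neg_zero_eq_self]

lemma integral_mul_pos (hρ0 : ∀ x, 0 ≤ ρ x) (hρ : ∫ x, ρ x ∂μ ≠ 0) {h : α → ℝ}
    (hh : ∀ x, 0 < h x) (hint : Integrable (fun x => ρ x * h x) μ) :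
    0 < ∫ x, ρ x * h x ∂μ := by
  refine (integral_nonneg fun x => mul_nonneg (hρ0 x) (hh x).le).lt_of_ne' fun h0 => hρ ?_
  have hzero :=
    (integral_eq_zero_iff_of_nonneg (fun x => mul_nonneg (hρ0 x) (hh x).le) hint).1 h0
  refine integral_eq_zero_of_ae ?_
  filter_upwards [hzero] with x hx
  simpa [(hh x).ne'] using hx

end ExpIntegrals

section TemperedIntegrals

variable {α : Type*} [MeasurableSpace α] {μ : Measure α} {p0 L : α → ℝ} {ε : ℝ}

lemma integrable_mul_exp_mul_log (hp0m : Measurable p0) (hLm : Measurable L)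
    (hLpos : ∀ x, 0 < L x) (hL1 : ∀ x, L x ≤ 1)
    (hinfo : Integrable (fun x => p0 x * L x ^ (-ε)) μ) {s : ℝ} (hs : -ε ≤ s) :
    Integrable (fun x => p0 x * exp (s * log (L x))) μ := by
  refine hinfo.mono (hp0m.mul (measurable_exp.comp (hLm.log.const_mul s))).aestronglyMeasurable
    (ae_of_all _ fun x => ?_)
  rw [mul_comm s, ← rpow_def_of_pos (hLpos x), norm_mul, norm_mul]
  gcongr
  rw [norm_of_nonneg (rpow_nonneg (hLpos x).le _), norm_of_nonneg (rpow_nonneg (hLpos x).le _)]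
  exact rpow_le_rpow_of_exponent_ge (hLpos x) (hL1 x) hs

lemma Ioi_subset_interior_integrable_mul_exp_mul_log (hp0m : Measurable p0) (hLm : Measurable L)
    (hLpos : ∀ x, 0 < L x) (hL1 : ∀ x, L x ≤ 1)
    (hinfo : Integrable (fun x => p0 x * L x ^ (-ε)) μ) :
    Ioi (-ε) ⊆ interior {s | Integrable (fun x => p0 x * exp (s * log (L x))) μ} :=
  interior_maximal (fun _ hs => integrable_mul_exp_mul_log hp0m hLm hLpos hL1 hinfo
    (le_of_lt hs)) isOpen_Ioi

lemma integrable_mul_mul_exp_mul_log_of_growth (hp0m : Measurable p0) (hp0 : ∀ x, 0 ≤ p0 x)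
    (hLm : Measurable L) (hLpos : ∀ x, 0 < L x) (hL1 : ∀ x, L x ≤ 1)
    (hinfo : Integrable (fun x => p0 x * L x ^ (-ε)) μ)
    {f : α → ℝ} (hf : Measurable f) {C₁ C₂ : ℝ} {m : ℕ}
    (hgrowth : ∀ x, |f x| ≤ C₁ + C₂ * |log (L x)| ^ m) {s : ℝ} (hs : -ε < s) :
    Integrable (fun x => f x * p0 x * exp (s * log (L x))) μ := by
  have hs' := Ioi_subset_interior_integrable_mul_exp_mul_log hp0m hLm hLpos hL1 hinfo hs
  have hbound :=
    ((integrable_mul_pow_abs_mul_exp_of_mem_interior hp0m hp0 hs' 0).const_mul C₁).add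
      ((integrable_mul_pow_abs_mul_exp_of_mem_interior hp0m hp0 hs' m).const_mul C₂)
  refine hbound.mono' ((hf.mul hp0m).mul
    (measurable_exp.comp (hLm.log.const_mul s))).aestronglyMeasurable (ae_of_all _ fun x => ?_)
  have hw : 0 ≤ p0 x * exp (s * log (L x)) := mul_nonneg (hp0 x) (exp_pos _).le
  calc ‖f x * p0 x * exp (s * log (L x))‖ = |f x| * (p0 x * exp (s * log (L x))) := by
        rw [norm_eq_abs, mul_assoc, abs_mul, abs_of_nonneg hw]
    _ ≤ (C₁ + C₂ * |log (L x)| ^ m) * (p0 x * exp (s * log (L x))) := by gcongr; exact hgrowth x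
    _ = _ := by simp only [Pi.add_apply, pow_zero]; ring

end TemperedIntegrals

theorem stmt_9_general (d : ℕ) (p0 L f : (Fin d → ℝ) → ℝ)
    (hp0m : Measurable p0) (hp0 : ∀ x, 0 ≤ p0 x) (hp0int : ∫ x, p0 x = 1)
    (hLm : Measurable L) (hLpos : ∀ x, 0 < L x)
    (c : ℝ) (hc : c < 1) (hLb : ∀ x, L x ≤ c)
    (hf : Measurable f)
    (C₁ C₂ : ℝ) (m : ℕ)
    (hgrowth : ∀ x, |f x| ≤ C₁ + C₂ * |Real.log (L x)| ^ m)
    (ε : ℝ) (hε : 0 < ε)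
    (hinfo : Integrable (fun x => p0 x * L x ^ (-ε)))
    (Z : ℝ → ℝ) (hZ : ∀ t, Z t = ∫ x, p0 x * L x ^ t)
    (p : ℝ → (Fin d → ℝ) → ℝ) (hp : ∀ t x, p t x = p0 x * L x ^ t / Z t)
    (g : ℝ → ℝ) (hg : ∀ t, g t = ∫ x, f x * p t x) :
    AnalyticOn ℝ g (Icc 0 1) := by
  have hL1 : ∀ x, L x ≤ 1 := fun x => (hLb x).trans hc.le
  have hrpow : ∀ t x, L x ^ t = exp (t * log (L x)) := fun t x => by
    rw [rpow_def_of_pos (hLpos x), mul_comm]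
  have hZ' : Z = fun t => ∫ x, p0 x * exp (t * log (L x)) := by
    funext t; simp only [hZ, hrpow]
  have hg' : g = fun t => (∫ x, f x * p0 x * exp (t * log (L x))) / Z t := by
    funext t; simp only [hg, hp, hrpow, mul_div_assoc', integral_div, mul_assoc]
  have hN : AnalyticOnNhd ℝ (fun t => ∫ x, f x * p0 x * exp (t * log (L x))) (Ioi (-ε)) :=
    (analyticOnNhd_integral_mul_exp_mul (hf.mul hp0m) hLm.log).mono <|
      interior_maximal (fun _ hs => integrable_mul_mul_exp_mul_log_of_growth hp0m hp0 hLm hLpos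
        hL1 hinfo hf hgrowth hs) isOpen_Ioi
  have hZa : AnalyticOnNhd ℝ Z (Ioi (-ε)) :=
    hZ' ▸ (analyticOnNhd_integral_mul_exp_mul hp0m hLm.log).mono
      (Ioi_subset_interior_integrable_mul_exp_mul_log hp0m hLm hLpos hL1 hinfo)
  have hZpos : ∀ t ∈ Ioi (-ε), 0 < Z t := fun t ht => hZ' ▸
    integral_mul_pos hp0 (by simp [hp0int]) (fun _ => exp_pos _)
      (integrable_mul_exp_mul_log hp0m hLm hLpos hL1 hinfo (le_of_lt ht))
  have hIcc : Icc (0 : ℝ) 1 ⊆ Ioi (-ε) := fun _ ht => (neg_lt_zero.2 hε).trans_le ht.1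
  rw [hg']
  exact ((hN.div hZa fun t ht => (hZpos t ht).ne').mono hIcc).analyticOn

/-- Sufficient conditions: under the growth condition `|f| ≤ C₁ + C₂|ℓ|^m` and the
informative prior condition `∫ p₀ L^{−ε} < ∞`, the tempered expectation
`g(t) = E_{p_t}[f]` is real analytic on `[0,1]`. -/
theorem stmt_9 (d : ℕ) (p0 L f : (Fin d → ℝ) → ℝ)
    (hp0m : Measurable p0) (hp0 : ∀ x, 0 ≤ p0 x) (hp0int : ∫ x, p0 x = 1)
    (hLm : Measurable L) (hLpos : ∀ x, 0 < L x)
    (c : ℝ) (hc : c < 1) (hLb : ∀ x, L x ≤ c)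
    (hf : Measurable f)
    (C₁ C₂ : ℝ) (hC₁ : 0 < C₁) (hC₂ : 0 < C₂) (m : ℕ)
    (hgrowth : ∀ x, |f x| ≤ C₁ + C₂ * |Real.log (L x)| ^ m)
    (ε : ℝ) (hε : 0 < ε)
    (hinfo : Integrable (fun x => p0 x * L x ^ (-ε)))
    (Z : ℝ → ℝ) (hZ : ∀ t, Z t = ∫ x, p0 x * L x ^ t)
    (p : ℝ → (Fin d → ℝ) → ℝ) (hp : ∀ t x, p t x = p0 x * L x ^ t / Z t)
    (g : ℝ → ℝ) (hg : ∀ t, g t = ∫ x, f x * p t x) :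
    AnalyticOn ℝ g (Icc 0 1) :=
  stmt_9_general d p0 L f hp0m hp0 hp0int hLm hLpos c hc hLb hf C₁ C₂ m hgrowth ε hε hinfo Z hZ p hp
    g hg
end

section
/- If the informative prior condition ∫ p_0(x) L(x)^{−ε} dx < ∞ holds for some ε > 0, then the map t ↦ log Z_t, where Z_t = ∫ p_0(x) L(x)^t dx, is real analytic on [0,1], and its derivative equals E_{p_t}[log L]. -/
/-!
Write `L = exp g` with `g = log L ≤ 0`, so that `Z t = ∫ p₀ exp (t g)` is the restriction to
the real axis of `F z = ∫ p₀ exp (z g)`. On the ball of radius `r = (re z + ε) / 2` about a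
point `z` with `re z > -ε`, the elementary bound `|g| exp (re w · g) ≤ exp (-ε g) / r` turns
the prior condition into an integrable majorant of the `w`-derivative of the integrand, and `F` is
complex differentiable, hence analytic, on the half-plane `re z > -ε`, with derivative taken under
the integral sign. As `Z > 0`, `log Z` is analytic near `[0, 1]` with derivative
`Z' / Z = E_{p_t}[log L]`.
-/

open MeasureTheory Set

lemma neg_le_exp_neg_mul_div {y r : ℝ} (hr : 0 < r) : -y ≤ Real.exp (-r * y) / r := by
  rw [le_div_iff₀ hr]
  linarith [Real.add_one_le_exp (-r * y)]

lemma abs_mul_exp_le_exp_div {y s r ε : ℝ} (hy : y ≤ 0) (hr : 0 < r) (hs : r - ε ≤ s) :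
    |y| * Real.exp (s * y) ≤ Real.exp (-ε * y) / r :=
  calc |y| * Real.exp (s * y)
      ≤ Real.exp (-r * y) / r * Real.exp ((r - ε) * y) := by
        rw [abs_of_nonpos hy]
        exact mul_le_mul (neg_le_exp_neg_mul_div hr)
          (Real.exp_le_exp.2 (mul_le_mul_of_nonpos_right hs hy)) (Real.exp_pos _).le
          (div_pos (Real.exp_pos _) hr).le
    _ = Real.exp (-ε * y) / r := by rw [div_mul_eq_mul_div, ← Real.exp_add]; ring_nf

lemma norm_ofReal_mul_cexp (a y : ℝ) (z : ℂ) :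
    ‖(a : ℂ) * Complex.exp (z * y)‖ = |a| * Real.exp (z.re * y) := by
  simp [Complex.norm_exp]

section LaplaceTransform

variable {α : Type*} [MeasurableSpace α] {μ : Measure α} {p g : α → ℝ} {ε : ℝ}

lemma integrable_mul_exp_mul_of_le (hp : Measurable p) (hg : Measurable g) (hg0 : ∀ x, g x ≤ 0)
    {a b : ℝ} (hint : Integrable (fun x => p x * Real.exp (a * g x)) μ) (hab : a ≤ b) :
    Integrable (fun x => p x * Real.exp (b * g x)) μ := by
  refine hint.mono (by fun_prop) (ae_of_all _ fun x => ?_)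
  simp only [norm_mul, Real.norm_eq_abs, Real.abs_exp]
  exact mul_le_mul_of_nonneg_left
    (Real.exp_le_exp.2 (mul_le_mul_of_nonpos_right hab (hg0 x))) (abs_nonneg _)

lemma integral_ofReal_mul_cexp (q : α → ℝ) (s : ℝ) :
    ∫ x, (q x : ℂ) * Complex.exp (s * g x) ∂μ =
      ((∫ x, q x * Real.exp (s * g x) ∂μ : ℝ) : ℂ) := by
  rw [← integral_complex_ofReal]
  push_cast
  rfl

lemma hasDerivAt_integral_ofReal_mul_cexp
    (hp : Measurable p) (hg : Measurable g) (hg0 : ∀ x, g x ≤ 0)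
    (hint : Integrable (fun x => p x * Real.exp (-ε * g x)) μ) {z : ℂ} (hz : -ε < z.re) :
    HasDerivAt (fun w : ℂ => ∫ x, (p x : ℂ) * Complex.exp (w * g x) ∂μ)
      (∫ x, (p x : ℂ) * g x * Complex.exp (z * g x) ∂μ) z := by
  set r := (z.re + ε) / 2
  have hr : 0 < r := by simp only [r]; linarith
  have hint_norm : Integrable (fun x => |p x| * Real.exp (-ε * g x)) μ := by
    simpa [Real.abs_exp] using hint.abs
  refine (hasDerivAt_integral_of_dominated_loc_of_deriv_le
    (F := fun w x => (p x : ℂ) * Complex.exp (w * g x))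
    (F' := fun w x => (p x : ℂ) * g x * Complex.exp (w * g x))
    (bound := fun x => |p x| * Real.exp (-ε * g x) / r) (Metric.ball_mem_nhds z hr)
    (.of_forall fun w => by fun_prop) ?_ (by fun_prop) (ae_of_all _ fun x w hw => ?_)
    (hint_norm.div_const r) (ae_of_all _ fun x w _ => ?_)).2
  · refine (integrable_mul_exp_mul_of_le hp hg hg0 hint hz.le).norm.congr' (by fun_prop)
      (ae_of_all _ fun x => ?_)
    simp [Complex.norm_exp]
  · have hw_re : r - ε ≤ w.re := by
      have := (abs_le.1 ((Complex.abs_re_le_norm (w - z)).trans (mem_ball_iff_norm.1 hw).le)).1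
      simp only [Complex.sub_re, r] at this ⊢
      linarith
    rw [mul_assoc, norm_mul, norm_ofReal_mul_cexp, Complex.norm_real, Real.norm_eq_abs,
      mul_div_assoc]
    exact mul_le_mul_of_nonneg_left (abs_mul_exp_le_exp_div (hg0 x) hr hw_re) (abs_nonneg _)
  · exact (((hasDerivAt_mul_const (g x : ℂ)).cexp).const_mul (p x : ℂ)).congr_deriv (by ring)

lemma hasDerivAt_integral_mul_exp
    (hp : Measurable p) (hg : Measurable g) (hg0 : ∀ x, g x ≤ 0)
    (hint : Integrable (fun x => p x * Real.exp (-ε * g x)) μ) {t : ℝ} (ht : -ε < t) :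
    HasDerivAt (fun s => ∫ x, p x * Real.exp (s * g x) ∂μ)
      (∫ x, p x * g x * Real.exp (t * g x) ∂μ) t := by
  have h := (hasDerivAt_integral_ofReal_mul_cexp hp hg hg0 hint
    (z := t) (by simpa using ht)).real_of_complex
  have hderiv := integral_ofReal_mul_cexp (μ := μ) (g := g) (fun x => p x * g x) t
  push_cast at hderiv
  simpa only [integral_ofReal_mul_cexp, hderiv, Complex.ofReal_re] using h

lemma analyticAt_integral_mul_exp
    (hp : Measurable p) (hg : Measurable g) (hg0 : ∀ x, g x ≤ 0)
    (hint : Integrable (fun x => p x * Real.exp (-ε * g x)) μ) {t : ℝ} (ht : -ε < t) :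
    AnalyticAt ℝ (fun s => ∫ x, p x * Real.exp (s * g x) ∂μ) t := by
  have hF : AnalyticAt ℂ (fun w : ℂ => ∫ x, (p x : ℂ) * Complex.exp (w * g x) ∂μ) t :=
    DifferentiableOn.analyticAt
      (fun w hw => (hasDerivAt_integral_ofReal_mul_cexp hp hg hg0 hint hw).differentiableAt
        |>.differentiableWithinAt)
      ((isOpen_lt continuous_const Complex.continuous_re).mem_nhds (by simpa using ht))
  simpa only [integral_ofReal_mul_cexp, Complex.ofReal_re] using hF.re_ofReal

lemma integral_mul_exp_pos {t : ℝ} (hp0 : ∀ x, 0 ≤ p x) (hpos : 0 < ∫ x, p x ∂μ)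
    (hint : Integrable (fun x => p x * Real.exp (t * g x)) μ) :
    0 < ∫ x, p x * Real.exp (t * g x) ∂μ := by
  have hp : Integrable p μ := by
    by_contra h
    exact hpos.ne' (integral_undef h)
  have hsupp : Function.support (fun x => p x * Real.exp (t * g x)) = Function.support p := by
    ext x
    simp [(Real.exp_pos _).ne']
  rw [integral_pos_iff_support_of_nonneg (fun x => mul_nonneg (hp0 x) (Real.exp_pos _).le) hint,
    hsupp]
  exact (integral_pos_iff_support_of_nonneg hp0 hp).1 hpos

end LaplaceTransform

/-- Under the informative prior condition, `t ↦ log Z_t` is real analytic on `[0,1]`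
with derivative `E_{p_t}[log L]`. -/
theorem stmt_14 (d : ℕ) (p0 L : (Fin d → ℝ) → ℝ)
    (hp0m : Measurable p0) (hp0 : ∀ x, 0 ≤ p0 x) (hp0int : ∫ x, p0 x = 1)
    (hLm : Measurable L) (hLpos : ∀ x, 0 < L x)
    (c : ℝ) (hc : c < 1) (hLb : ∀ x, L x ≤ c)
    (ε : ℝ) (hε : 0 < ε)
    (hinfo : Integrable (fun x => p0 x * L x ^ (-ε)))
    (Z : ℝ → ℝ) (hZ : ∀ t, Z t = ∫ x, p0 x * L x ^ t) :
    AnalyticOn ℝ (fun t => Real.log (Z t)) (Icc 0 1) ∧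
      ∀ t ∈ Icc (0 : ℝ) 1,
        HasDerivWithinAt (fun s => Real.log (Z s))
          (∫ x, Real.log (L x) * (p0 x * L x ^ t / Z t)) (Icc 0 1) t := by
  have hg0 : ∀ x, Real.log (L x) ≤ 0 := fun x =>
    Real.log_nonpos (hLpos x).le ((hLb x).trans hc.le)
  have hrpow : ∀ x (t : ℝ), L x ^ t = Real.exp (t * Real.log (L x)) := fun x t => by
    rw [Real.rpow_def_of_pos (hLpos x), mul_comm]
  simp_rw [hrpow] at hinfo hZ ⊢
  obtain rfl : Z = fun t => ∫ x, p0 x * Real.exp (t * Real.log (L x)) := funext hZ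
  have hε_lt : ∀ t ∈ Icc (0 : ℝ) 1, -ε < t := fun t ht => by linarith [ht.1]
  have hZpos : ∀ t ∈ Icc (0 : ℝ) 1, 0 < ∫ x, p0 x * Real.exp (t * Real.log (L x)) :=
    fun t ht => integral_mul_exp_pos hp0 (by rw [hp0int]; exact one_pos)
      (integrable_mul_exp_mul_of_le hp0m hLm.log hg0 hinfo (hε_lt t ht).le)
  refine ⟨fun t ht => ?_, fun t ht => ?_⟩
  · exact ((analyticAt_log (hZpos t ht)).comp
      (f := fun s => ∫ x, p0 x * Real.exp (s * Real.log (L x)))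
      (analyticAt_integral_mul_exp hp0m hLm.log hg0 hinfo (hε_lt t ht))).analyticWithinAt
  · refine (((hasDerivAt_integral_mul_exp hp0m hLm.log hg0 hinfo (hε_lt t ht)).log
      (hZpos t ht).ne').congr_deriv ?_).hasDerivWithinAt
    rw [← integral_div]
    congr 1 with x
    ring
end
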